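/- Let H be a mesh and let σ_0 →* σ_n be a sequence of collective operations between well-formed distributed types over H that is in normal form. Then its height satisfies 𝔥(σ_0 →* σ_n) ≤ max(localsize(σ_0), localsize(σ_n)). -/
import Mathlib


/-! ## Meshes, index tuples, distributed dimensions and types -/

structure Mesh where
  axes : Finset String
  size : String → ℕ
  size_pos : ∀ x ∈ axes, 1 ≤ size x

def Mesh.hasAxis (H : Mesh) (x : String) (n : ℕ) : Prop :=
  x ∈ H.axes ∧ H.size x = n

abbrev IndexTuple (H : Mesh) : Type :=
  {ι : String → ℕ // ∀ x : String, (x ∈ H.axes → ι x < H.size x) ∧ (x ∉ H.axes → ι x = 0)}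

structure Dim where
  tile : ℕ
  axes : List String
  global : ℕ
deriving DecidableEq

abbrev DType := List Dim

def Mesh.WFDim (H : Mesh) (d : Dim) : Prop :=
  1 ≤ d.tile ∧ d.axes.Nodup ∧ (∀ x ∈ d.axes, x ∈ H.axes) ∧
    d.tile * (d.axes.map H.size).prod = d.global

def Mesh.WFType (H : Mesh) (τ : DType) : Prop :=
  (∀ d ∈ τ, H.WFDim d) ∧ List.Pairwise (fun d e => ∀ x ∈ d.axes, x ∉ e.axes) τ

def globaltype (τ : DType) : List ℕ := τ.map Dim.global
def localtype (τ : DType) : List ℕ := τ.map Dim.tile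
def localsize (τ : DType) : ℕ := (τ.map Dim.tile).prod

def typeAxes : DType → List String
  | [] => []
  | d :: τ => d.axes ++ typeAxes τ

/-- Base offset map of a distributed dimension, `⟦c{xs}n⟧_D`. -/
def dimOffset (H : Mesh) : ℕ → List String → (String → ℕ) → ℕ
  | _, [], _ => 0
  | c, x :: xs, ι => c * ι x + dimOffset H (c * H.size x) xs ι

abbrev BOM (H : Mesh) : Type := IndexTuple H → List ℕ

/-- Base offset map of a distributed type, `⟦τ⟧_T`. -/
def typeOffset (H : Mesh) (τ : DType) : BOM H :=
  fun ι => τ.map (fun d => dimOffset H d.tile d.axes ι.val)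

/-! ## Collective operations (high-level typing rules) -/

inductive Label where
  | allGather (i : ℕ)
  | dynSlice (i : ℕ) (x : String)
  | allToAll (i j : ℕ)
  | allPermute
deriving DecidableEq

inductive OpKind where
  | gather | slice | toAll | permute
deriving DecidableEq

def Label.kind : Label → OpKind
  | .allGather _ => .gather
  | .dynSlice _ _ => .slice
  | .allToAll _ _ => .toAll
  | .allPermute => .permute

inductive Step (H : Mesh) : Label → DType → DType → Prop where
  | allGather {τ : DType} (i : ℕ) {c : ℕ} {x : String} {xs : List String} {s n : ℕ}
      (hwf : H.WFType τ) (hx : H.hasAxis x n)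
      (hi : τ[i]? = some ⟨c, x :: xs, s⟩) :
      Step H (.allGather i) τ (τ.set i ⟨c * n, xs, s⟩)
  | dynSlice {τ : DType} (i : ℕ) (x : String) {c : ℕ} {xs : List String} {s n : ℕ}
      (hwf : H.WFType τ) (hx : H.hasAxis x n) (hfresh : x ∉ typeAxes τ)
      (hi : τ[i]? = some ⟨c * n, xs, s⟩) :
      Step H (.dynSlice i x) τ (τ.set i ⟨c, x :: xs, s⟩)
  | allToAll {τ : DType} (i j : ℕ) {ci : ℕ} {x : String} {xsi : List String} {si cj : ℕ}
      {xsj : List String} {sj n : ℕ}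
      (hwf : H.WFType τ) (hij : i ≠ j) (hx : H.hasAxis x n)
      (hi : τ[i]? = some ⟨ci, x :: xsi, si⟩)
      (hj : τ[j]? = some ⟨cj, xsj, sj⟩)
      (hdvd : n ∣ cj) :
      Step H (.allToAll i j) τ ((τ.set i ⟨ci * n, xsi, si⟩).set j ⟨cj / n, x :: xsj, sj⟩)
  | allPermute {τ₁ τ₂ : DType}
      (hwf1 : H.WFType τ₁) (hwf2 : H.WFType τ₂)
      (hl : localtype τ₁ = localtype τ₂) (hg : globaltype τ₁ = globaltype τ₂) :
      Step H .allPermute τ₁ τ₂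

/-! ## Sequences of collective operations -/

inductive CSeq (H : Mesh) : DType → DType → Type where
  | nil (τ : DType) : CSeq H τ τ
  | cons {τ₁ τ₂ τ₃ : DType} (p : Label) (h : Step H p τ₁ τ₂) (s : CSeq H τ₂ τ₃) : CSeq H τ₁ τ₃

def CSeq.labels {H : Mesh} : {τ₁ τ₂ : DType} → CSeq H τ₁ τ₂ → List Label
  | _, _, .nil _ => []
  | _, _, .cons p _ s => p :: s.labels

def CSeq.typesList {H : Mesh} : {τ₁ τ₂ : DType} → CSeq H τ₁ τ₂ → List DType
  | _, _, .nil τ => [τ]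
  | τ, _, .cons _ _ s => τ :: s.typesList

/-- The height 𝔥 of a sequence: the maximum `localsize` over all types in it. -/
def CSeq.height {H : Mesh} {τ₁ τ₂ : DType} (s : CSeq H τ₁ τ₂) : ℕ :=
  (s.typesList.map localsize).foldr max 0

/-- Cost of a single step with source `σ₁` and target `σ₂`. -/
def stepCost (p : Label) (σ₁ σ₂ : DType) : ℕ :=
  match p with
  | .allGather _ => localsize σ₂
  | .dynSlice _ _ => 0
  | .allToAll _ _ => localsize σ₁
  | .allPermute => localsize σ₁

def CSeq.cost {H : Mesh} : {τ₁ τ₂ : DType} → CSeq H τ₁ τ₂ → ℕ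
  | _, _, .nil _ => 0
  | _, _, @CSeq.cons _ σ₁ σ₂ _ p _ s => stepCost p σ₁ σ₂ + s.cost

/-- Normal form: labels matched by `dynSlice* {allToAll | allPermute}* allGather*`. -/
def NormalFormK (ks : List OpKind) : Prop :=
  ∃ a b c : List OpKind, ks = a ++ b ++ c ∧
    (∀ k ∈ a, k = OpKind.slice) ∧
    (∀ k ∈ b, k = OpKind.toAll ∨ k = OpKind.permute) ∧
    (∀ k ∈ c, k = OpKind.gather)

/-! ## Weak collectives -/

/-- Equivalence of base offset maps. -/
def bomEquiv (H : Mesh) (β₁ β₂ : BOM H) : Prop :=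
  ∃ π : Equiv.Perm (IndexTuple H), β₂ = β₁ ∘ π

/-- The weak collective relation `⟦τ₁⟧_E ▶^p ⟦τ₂⟧_E`, represented on types. -/
def WeakStep (H : Mesh) (p : Label) (τ₁ τ₂ : DType) : Prop :=
  p ≠ Label.allPermute ∧ H.WFType τ₁ ∧ H.WFType τ₂ ∧
  ∃ σ₁ σ₂ : DType, Step H p σ₁ σ₂ ∧
    bomEquiv H (typeOffset H σ₁) (typeOffset H τ₁) ∧
    bomEquiv H (typeOffset H σ₂) (typeOffset H τ₂)

inductive WkSeq (H : Mesh) : DType → DType → Type where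
  | nil (τ : DType) : WkSeq H τ τ
  | cons {τ₁ τ₂ τ₃ : DType} (p : Label) (h : WeakStep H p τ₁ τ₂) (s : WkSeq H τ₂ τ₃) :
      WkSeq H τ₁ τ₃

def WkSeq.labels {H : Mesh} : {τ₁ τ₂ : DType} → WkSeq H τ₁ τ₂ → List Label
  | _, _, .nil _ => []
  | _, _, .cons p _ s => p :: s.labels

def WkSeq.typesList {H : Mesh} : {τ₁ τ₂ : DType} → WkSeq H τ₁ τ₂ → List DType
  | _, _, .nil τ => [τ]
  | τ, _, .cons _ _ s => τ :: s.typesList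

def WkSeq.height {H : Mesh} {τ₁ τ₂ : DType} (s : WkSeq H τ₁ τ₂) : ℕ :=
  (s.typesList.map localsize).foldr max 0

def WkSeq.cost {H : Mesh} : {τ₁ τ₂ : DType} → WkSeq H τ₁ τ₂ → ℕ
  | _, _, .nil _ => 0
  | _, _, @WkSeq.cons _ σ₁ σ₂ _ p _ s => stepCost p σ₁ σ₂ + s.cost

/-! ## Low-level MPI-style collectives on device assignments -/

abbrev DevMap (H : Mesh) (D : Type) := IndexTuple H ≃ D

structure DevAssign (H : Mesh) (D : Type) where
  dmap : DevMap H D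
  bom : BOM H

inductive LLabel where
  | allGather (x : String)
  | allToAll (x : String) (j : ℕ)
  | dynSlice (i : ℕ) (x : String)
  | allPermute
deriving DecidableEq

def LLabel.kind : LLabel → OpKind
  | .allGather _ => .gather
  | .allToAll _ _ => .toAll
  | .dynSlice _ _ => .slice
  | .allPermute => .permute

inductive LStep (H : Mesh) (D : Type) : LLabel → DevAssign H D → DevAssign H D → Type where
  | gather (τ : DType) (i : ℕ) (c : ℕ) (ys : List String) (x : String) (xs : List String)
      (s n : ℕ) (φ φ' : DevMap H D)
      (hwf : H.WFType τ) (hx : H.hasAxis x n)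
      (hi : τ[i]? = some ⟨c, ys ++ x :: xs, s⟩)
      (hmap : typeOffset H (τ.set i ⟨c, x :: (ys ++ xs), s⟩) ∘ ⇑φ'.symm
            = typeOffset H τ ∘ ⇑φ.symm) :
      LStep H D (.allGather x) ⟨φ, typeOffset H τ⟩
        ⟨φ', typeOffset H (τ.set i ⟨c * n, ys ++ xs, s⟩)⟩
  | toAll (τ : DType) (i j : ℕ) (ci : ℕ) (ys : List String) (x : String) (xs : List String)
      (si cj : ℕ) (xsj : List String) (sj n : ℕ) (φ φ' : DevMap H D)
      (hwf : H.WFType τ) (hij : i ≠ j) (hx : H.hasAxis x n)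
      (hi : τ[i]? = some ⟨ci, ys ++ x :: xs, si⟩)
      (hj : τ[j]? = some ⟨cj, xsj, sj⟩)
      (hdvd : n ∣ cj)
      (hmap : typeOffset H (τ.set i ⟨ci, x :: (ys ++ xs), si⟩) ∘ ⇑φ'.symm
            = typeOffset H τ ∘ ⇑φ.symm) :
      LStep H D (.allToAll x j) ⟨φ, typeOffset H τ⟩
        ⟨φ', typeOffset H ((τ.set i ⟨ci * n, ys ++ xs, si⟩).set j ⟨cj / n, x :: xsj, sj⟩)⟩
  | slice (τ : DType) (i : ℕ) (x : String) (c : ℕ) (xs : List String) (s n : ℕ)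
      (φ : DevMap H D)
      (hwf : H.WFType τ) (hx : H.hasAxis x n) (hfresh : x ∉ typeAxes τ)
      (hi : τ[i]? = some ⟨c * n, xs, s⟩) :
      LStep H D (.dynSlice i x) ⟨φ, typeOffset H τ⟩ ⟨φ, typeOffset H (τ.set i ⟨c, x :: xs, s⟩)⟩
  | permute (τ : DType) (ρ : Equiv.Perm (IndexTuple H)) (β' : BOM H)
      (φ φ' : DevMap H D) (π : Equiv.Perm D)
      (hwf : H.WFType τ)
      (hmap : β' ∘ ⇑φ'.symm = (typeOffset H τ ∘ ⇑ρ) ∘ ⇑φ.symm ∘ ⇑π) :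
      LStep H D .allPermute ⟨φ, typeOffset H τ ∘ ⇑ρ⟩ ⟨φ', β'⟩

def LStep.cost {H : Mesh} {D : Type} :
    {l : LLabel} → {a b : DevAssign H D} → LStep H D l a b → ℕ
  | _, _, _, .gather τ i c ys x xs s n .. => localsize (τ.set i ⟨c * n, ys ++ xs, s⟩)
  | _, _, _, .toAll τ .. => localsize τ
  | _, _, _, .slice .. => 0
  | _, _, _, .permute τ .. => localsize τ

inductive LoSeq (H : Mesh) (D : Type) : DevAssign H D → DevAssign H D → Type where
  | nil (a : DevAssign H D) : LoSeq H D a a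
  | cons {a b c : DevAssign H D} (l : LLabel) (st : LStep H D l a b) (s : LoSeq H D b c) :
      LoSeq H D a c

def LoSeq.labels {H : Mesh} {D : Type} : {a b : DevAssign H D} → LoSeq H D a b → List LLabel
  | _, _, .nil _ => []
  | _, _, .cons l _ s => l :: s.labels

def LoSeq.states {H : Mesh} {D : Type} : {a b : DevAssign H D} → LoSeq H D a b → List (DevAssign H D)
  | _, _, .nil a => [a]
  | a, _, .cons _ _ s => a :: s.states

def LoSeq.cost {H : Mesh} {D : Type} : {a b : DevAssign H D} → LoSeq H D a b → ℕ
  | _, _, .nil _ => 0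
  | _, _, .cons _ st s => st.cost + s.cost
/-! ## Auxiliary lemmas for the normal-form height bound -/

private lemma prod_set_mul {l : List ℕ} {i a : ℕ} (h : l[i]? = some a) (b : ℕ) :
    (l.set i b).prod * a = l.prod * b := by
  obtain ⟨hi, ha⟩ := List.getElem?_eq_some_iff.mp h
  have h1 : l.drop i = a :: l.drop (i+1) := by
    rw [← ha]; exact (List.getElem_cons_drop ..).symm
  have h2 : l.prod = (l.take i).prod * (a * (l.drop (i+1)).prod) := by
    conv_lhs => rw [← List.take_append_drop i l]
    rw [List.prod_append, h1, List.prod_cons]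
  rw [List.prod_set, if_pos hi, h2]; ring

private lemma ls_set {τ : DType} {i : ℕ} {e : Dim} (d : Dim) (h : τ[i]? = some e) :
    localsize (τ.set i d) * e.tile = localsize τ * d.tile := by
  unfold localsize
  rw [List.map_set]
  refine prod_set_mul ?_ d.tile
  rw [List.getElem?_map, h]; rfl

private lemma tile_pos {H : Mesh} {τ : DType} (hwf : H.WFType τ) {i : ℕ} {d : Dim}
    (h : τ[i]? = some d) : 0 < d.tile :=
  (hwf.1 d (List.mem_of_getElem? h)).1

private lemma axis_pos' {H : Mesh} {x : String} {n : ℕ} (hx : H.hasAxis x n) : 1 ≤ n :=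
  hx.2 ▸ H.size_pos x hx.1

private lemma step_slice_le {H : Mesh} {p : Label} {τ₁ τ₂ : DType} (h : Step H p τ₁ τ₂)
    (hk : p.kind = .slice) : localsize τ₂ ≤ localsize τ₁ := by
  cases h with
  | allGather i hwf hx hi => simp [Label.kind] at hk
  | allToAll i j hwf hij hx hi hj hdvd => simp [Label.kind] at hk
  | allPermute hwf1 hwf2 hl hg => simp [Label.kind] at hk
  | @dynSlice τ i x c xs s n hwf hx hfresh hi =>
    have hpos : 0 < c * n := tile_pos hwf hi
    have hn : 1 ≤ n := axis_pos' hx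
    have key := ls_set (τ := τ₁) (i := i) ⟨c, x :: xs, s⟩ hi
    have : localsize (τ₁.set i ⟨c, x :: xs, s⟩) * (c * n) ≤ localsize τ₁ * (c * n) := by
      calc localsize (τ₁.set i ⟨c, x :: xs, s⟩) * (c * n) = localsize τ₁ * c := key
        _ ≤ localsize τ₁ * (c * n) := Nat.mul_le_mul_left _ (Nat.le_mul_of_pos_right c hn)
    exact Nat.le_of_mul_le_mul_right this hpos

private lemma step_gather_le {H : Mesh} {p : Label} {τ₁ τ₂ : DType} (h : Step H p τ₁ τ₂)
    (hk : p.kind = .gather) : localsize τ₁ ≤ localsize τ₂ := by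
  cases h with
  | dynSlice i x hwf hx hfresh hi => simp [Label.kind] at hk
  | allToAll i j hwf hij hx hi hj hdvd => simp [Label.kind] at hk
  | allPermute hwf1 hwf2 hl hg => simp [Label.kind] at hk
  | @allGather τ i c x xs s n hwf hx hi =>
    have hpos : 0 < c := tile_pos hwf hi
    have hn : 1 ≤ n := axis_pos' hx
    have key := ls_set (τ := τ₁) (i := i) ⟨c * n, xs, s⟩ hi
    have : localsize τ₁ * c ≤ localsize (τ₁.set i ⟨c * n, xs, s⟩) * c := by
      calc localsize τ₁ * c ≤ localsize τ₁ * (c * n) :=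
            Nat.mul_le_mul_left _ (Nat.le_mul_of_pos_right c hn)
        _ = localsize (τ₁.set i ⟨c * n, xs, s⟩) * c := key.symm
    exact Nat.le_of_mul_le_mul_right this hpos

private lemma step_mid_eq {H : Mesh} {p : Label} {τ₁ τ₂ : DType} (h : Step H p τ₁ τ₂)
    (hk : p.kind = .toAll ∨ p.kind = .permute) : localsize τ₁ = localsize τ₂ := by
  cases h with
  | allGather i hwf hx hi => simp [Label.kind] at hk
  | dynSlice i x hwf hx hfresh hi => simp [Label.kind] at hk
  | allPermute hwf1 hwf2 hl hg =>
    unfold localtype at hl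
    unfold localsize; rw [hl]
  | @allToAll τ i j ci x xsi si cj xsj sj n hwf hij hx hi hj hdvd =>
    have hci : 0 < ci := tile_pos hwf hi
    have hcj : 0 < cj := tile_pos hwf hj
    have hj' : (τ₁.set i ⟨ci * n, xsi, si⟩)[j]? = some ⟨cj, xsj, sj⟩ := by
      rw [List.getElem?_set_ne hij]; exact hj
    have key1 := ls_set (τ := τ₁) (i := i) ⟨ci * n, xsi, si⟩ hi
    have key2 := ls_set (τ := τ₁.set i ⟨ci * n, xsi, si⟩) (i := j) ⟨cj / n, x :: xsj, sj⟩ hj'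
    have hnd : n * (cj / n) = cj := Nat.mul_div_cancel' hdvd
    have : localsize ((τ₁.set i ⟨ci * n, xsi, si⟩).set j ⟨cj / n, x :: xsj, sj⟩) * (cj * ci)
        = localsize τ₁ * (cj * ci) := by
      calc localsize ((τ₁.set i ⟨ci * n, xsi, si⟩).set j ⟨cj / n, x :: xsj, sj⟩) * (cj * ci)
          = localsize ((τ₁.set i ⟨ci * n, xsi, si⟩).set j ⟨cj / n, x :: xsj, sj⟩) * cj * ci := by
            ring
        _ = localsize (τ₁.set i ⟨ci * n, xsi, si⟩) * (cj / n) * ci := by rw [key2]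
        _ = localsize (τ₁.set i ⟨ci * n, xsi, si⟩) * ci * (cj / n) := by ring
        _ = localsize τ₁ * (ci * n) * (cj / n) := by rw [key1]
        _ = localsize τ₁ * ci * (n * (cj / n)) := by ring
        _ = localsize τ₁ * ci * cj := by rw [hnd]
        _ = localsize τ₁ * (cj * ci) := by ring
    exact (Nat.eq_of_mul_eq_mul_right (Nat.mul_pos hcj hci) this).symm

private lemma height_nil {H : Mesh} (τ : DType) :
    (CSeq.nil (H := H) τ).height = localsize τ := by
  simp [CSeq.height, CSeq.typesList]

private lemma height_cons {H : Mesh} {τ₁ τ₂ τ₃ : DType} (p : Label) (h : Step H p τ₁ τ₂)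
    (s : CSeq H τ₂ τ₃) :
    (CSeq.cons p h s).height = max (localsize τ₁) s.height := rfl

private lemma height_gather_phase {H : Mesh} : ∀ {τ₁ τ₂ : DType} (s : CSeq H τ₁ τ₂),
    (∀ k ∈ s.labels.map Label.kind, k = OpKind.gather) →
    s.height ≤ localsize τ₂ ∧ localsize τ₁ ≤ localsize τ₂ := by
  intro τ₁ τ₂ s
  induction s with
  | nil τ => intro _; rw [height_nil]; exact ⟨le_refl _, le_refl _⟩
  | @cons σ₁ σ₂ σ₃ p h s ih =>
    intro hall
    have hk : p.kind = .gather := hall _ (by simp [CSeq.labels])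
    have hle := step_gather_le h hk
    obtain ⟨h1, h2⟩ := ih (fun k hk' => hall k (by simp [CSeq.labels] at hk' ⊢; tauto))
    rw [height_cons]
    exact ⟨max_le (le_trans hle h2) h1, le_trans hle h2⟩

private lemma height_mid_phase {H : Mesh} : ∀ {τ₁ τ₂ : DType} (s : CSeq H τ₁ τ₂)
    (b c : List OpKind), s.labels.map Label.kind = b ++ c →
    (∀ k ∈ b, k = OpKind.toAll ∨ k = OpKind.permute) →
    (∀ k ∈ c, k = OpKind.gather) →
    s.height ≤ max (localsize τ₁) (localsize τ₂) := by
  intro τ₁ τ₂ s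
  induction s with
  | nil τ => intro _ _ _ _ _; rw [height_nil]; exact le_max_left _ _
  | @cons σ₁ σ₂ σ₃ p h s ih =>
    intro b c heq hb hc
    cases b with
    | nil =>
      simp only [List.nil_append] at heq
      have hall : ∀ k ∈ (CSeq.cons p h s).labels.map Label.kind, k = OpKind.gather := by
        intro k hk; exact hc k (heq ▸ hk)
      obtain ⟨h1, _⟩ := height_gather_phase _ hall
      exact le_trans h1 (le_max_right _ _)
    | cons k b' =>
      simp only [CSeq.labels, List.map_cons, List.cons_append, List.cons.injEq] at heq
      obtain ⟨hk, hrest⟩ := heq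
      have hmid : p.kind = .toAll ∨ p.kind = .permute := hk ▸ hb k (by simp)
      have heqs := step_mid_eq h hmid
      have := ih b' c hrest (fun k hk' => hb k (by simp [hk'])) hc
      rw [height_cons, heqs]
      exact max_le (le_max_left _ _) this

private lemma height_nf {H : Mesh} : ∀ {τ₁ τ₂ : DType} (s : CSeq H τ₁ τ₂)
    (a b c : List OpKind), s.labels.map Label.kind = a ++ b ++ c →
    (∀ k ∈ a, k = OpKind.slice) →
    (∀ k ∈ b, k = OpKind.toAll ∨ k = OpKind.permute) →
    (∀ k ∈ c, k = OpKind.gather) →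
    s.height ≤ max (localsize τ₁) (localsize τ₂) := by
  intro τ₁ τ₂ s
  induction s with
  | nil τ => intro _ _ _ _ _ _ _; rw [height_nil]; exact le_max_left _ _
  | @cons σ₁ σ₂ σ₃ p h s ih =>
    intro a b c heq ha hb hc
    cases a with
    | nil =>
      simp only [List.nil_append] at heq
      exact height_mid_phase _ b c heq hb hc
    | cons k a' =>
      simp only [CSeq.labels, List.map_cons, List.cons_append, List.cons.injEq] at heq
      obtain ⟨hk, hrest⟩ := heq
      have hsl : p.kind = .slice := hk ▸ ha k (by simp)
      have hle := step_slice_le h hsl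
      have := ih a' b c hrest (fun k hk' => ha k (by simp [hk'])) hb hc
      rw [height_cons]
      refine max_le (le_max_left _ _) (le_trans this ?_)
      exact max_le (le_trans hle (le_max_left _ _)) (le_max_right _ _)

/-- A sequence in normal form solves the memory-constrained redistribution problem. -/
theorem stmt6 (H : Mesh) (σ₀ σₙ : DType) (s : CSeq H σ₀ σₙ)
    (hnf : NormalFormK (s.labels.map Label.kind)) :
    s.height ≤ max (localsize σ₀) (localsize σₙ) := by
  obtain ⟨a, b, c, heq, ha, hb, hc⟩ := hnf
  exact height_nf s a b c heq ha hb hc
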